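/- Fix λ ∈ ℂ\{0}, ρ ∈ ℝ, and a smooth q : ℝ×ℝ → ℂ. Suppose Φ = (φ₁,φ₂) : ℝ×ℝ → ℂ² is smooth, satisfies both equations of the Lax pair ∂ₓΦ = U(λ)Φ and ∂ₜΦ = V(λ)Φ at every (x,t), and φ₁ never vanishes. Then, with Λ := φ₂/φ₁, the conservation-type identity ∂ₜ[ (q/λ) Λ ] = ∂ₓ[ V₁ + V₂ Λ ] holds at every (x,t) ∈ ℝ². -/

import Mathlib

open Complex

/-- Partial derivative in the space variable `x` (first coordinate). -/
noncomputable def pdx (f : ℝ × ℝ → ℂ) : ℝ × ℝ → ℂ :=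
  fun p => deriv (fun x => f (x, p.2)) p.1

/-- Partial derivative in the time variable `t` (second coordinate). -/
noncomputable def pdt (f : ℝ × ℝ → ℂ) : ℝ × ℝ → ℂ :=
  fun p => deriv (fun t => f (p.1, t)) p.2

/-- The reverse space-time reflection `q̃(x,t) = q(-x,-t)`. -/
def tq (q : ℝ × ℝ → ℂ) : ℝ × ℝ → ℂ := fun p => q (-p.1, -p.2)

/-- `q̂₁(x,t) = (∂ₓq)(-x,-t)`. -/
noncomputable def hq1 (q : ℝ × ℝ → ℂ) : ℝ × ℝ → ℂ := fun p => pdx q (-p.1, -p.2)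

/-- `q̂₂(x,t) = (∂ₓ²q)(-x,-t)`. -/
noncomputable def hq2 (q : ℝ × ℝ → ℂ) : ℝ × ℝ → ℂ := fun p => pdx (pdx q) (-p.1, -p.2)

/-- Entry `V₁` of the nonlocal Lax matrix `V(λ)`. -/
noncomputable def Vent1 (q : ℝ × ℝ → ℂ) (ρ : ℝ) (l : ℂ) (p : ℝ × ℝ) : ℂ :=
  -(3 * I / 2) * (q p) ^ 2 * (tq q p) ^ 2 / l ^ 2 - 4 * I * (ρ : ℂ) ^ 2
    - hq1 q p * q p / l ^ 2 - pdx q p * tq q p / l ^ 2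
    + 2 * I * q p * tq q p / l ^ 4 + 8 * I * (ρ : ℂ) / l ^ 4 - 4 * I / l ^ 6

/-- Entry `V₂` of the nonlocal Lax matrix `V(λ)`. -/
noncomputable def Vent2 (q : ℝ × ℝ → ℂ) (ρ : ℝ) (l : ℂ) (p : ℝ × ℝ) : ℂ :=
  -pdx (pdx q) p / l - 3 * I * pdx q p * q p * tq q p / l + 2 * I * pdx q p / l ^ 3
    + (3 / 2) * (q p) ^ 3 * (tq q p) ^ 2 / l - 4 * q p * (ρ : ℂ) ^ 2 / l
    - 2 * (q p) ^ 2 * tq q p * (ρ : ℂ) / l - 2 * (q p) ^ 2 * tq q p / l ^ 3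
    - 4 * q p * (ρ : ℂ) / l ^ 3 + 4 * q p / l ^ 5

/-- Entry `V₃` of the nonlocal Lax matrix `V(λ)`. -/
noncomputable def Vent3 (q : ℝ × ℝ → ℂ) (ρ : ℝ) (l : ℂ) (p : ℝ × ℝ) : ℂ :=
  hq2 q p / l + 3 * I * hq1 q p * q p * tq q p / l - 2 * I * hq1 q p / l ^ 3
    - (3 / 2) * (q p) ^ 2 * (tq q p) ^ 3 / l + 2 * q p * (tq q p) ^ 2 * (ρ : ℂ) / l
    + 2 * q p * (tq q p) ^ 2 / l ^ 3 + 4 * tq q p * (ρ : ℂ) ^ 2 / l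
    + 4 * tq q p * (ρ : ℂ) / l ^ 3 - 4 * tq q p / l ^ 5

lemma hasDerivAt_fst' (f : ℝ × ℝ → ℂ) (p : ℝ × ℝ) (hf : DifferentiableAt ℝ f p) :
    HasDerivAt (fun x => f (x, p.2)) (fderiv ℝ f p (1, 0)) p.1 := by
  have h1 : HasDerivAt (fun x : ℝ => ((x, p.2) : ℝ × ℝ)) (1, 0) p.1 :=
    (hasDerivAt_id _).prodMk (hasDerivAt_const _ _)
  have h2 := HasFDerivAt.comp_hasDerivAt p.1 (l := f) (by simpa using hf.hasFDerivAt) h1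
  exact h2

lemma hasDerivAt_snd' (f : ℝ × ℝ → ℂ) (p : ℝ × ℝ) (hf : DifferentiableAt ℝ f p) :
    HasDerivAt (fun t => f (p.1, t)) (fderiv ℝ f p (0, 1)) p.2 := by
  have h1 : HasDerivAt (fun t : ℝ => ((p.1, t) : ℝ × ℝ)) (0, 1) p.2 :=
    (hasDerivAt_const _ _).prodMk (hasDerivAt_id _)
  have h2 := HasFDerivAt.comp_hasDerivAt p.2 (l := f) (by simpa using hf.hasFDerivAt) h1
  exact h2

lemma pdx_eq' (f : ℝ × ℝ → ℂ) (p : ℝ × ℝ) (hf : DifferentiableAt ℝ f p) :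
    pdx f p = fderiv ℝ f p (1, 0) := (hasDerivAt_fst' f p hf).deriv

lemma pdt_eq' (f : ℝ × ℝ → ℂ) (p : ℝ × ℝ) (hf : DifferentiableAt ℝ f p) :
    pdt f p = fderiv ℝ f p (0, 1) := (hasDerivAt_snd' f p hf).deriv

lemma pdx_contDiff (f : ℝ × ℝ → ℂ) (hf : ContDiff ℝ (⊤ : ℕ∞) f) : ContDiff ℝ (⊤ : ℕ∞) (pdx f) := by
  have : pdx f = fun p => fderiv ℝ f p (1, 0) :=
    funext fun p => pdx_eq' f p (hf.differentiable (by simp) p)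
  rw [this]
  exact (hf.fderiv_right (by simp)).clm_apply contDiff_const

lemma pdt_contDiff (f : ℝ × ℝ → ℂ) (hf : ContDiff ℝ (⊤ : ℕ∞) f) : ContDiff ℝ (⊤ : ℕ∞) (pdt f) := by
  have : pdt f = fun p => fderiv ℝ f p (0, 1) :=
    funext fun p => pdt_eq' f p (hf.differentiable (by simp) p)
  rw [this]
  exact (hf.fderiv_right (by simp)).clm_apply contDiff_const

lemma pd_comm (f : ℝ × ℝ → ℂ) (hf : ContDiff ℝ (⊤ : ℕ∞) f) (p : ℝ × ℝ) :
    pdt (pdx f) p = pdx (pdt f) p := by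
  have hf' : Differentiable ℝ f := hf.differentiable (by simp)
  have hfd : Differentiable ℝ (fderiv ℝ f) := (hf.fderiv_right (m := (⊤ : ℕ∞)) (by simp)).differentiable (by simp)
  have key := second_derivative_symmetric (f := f) (f' := fderiv ℝ f)
    (f'' := fderiv ℝ (fderiv ℝ f) p) (x := p)
    (fun y => (hf' y).hasFDerivAt) (hfd p).hasFDerivAt
  have e1 : pdx f = fun q => fderiv ℝ f q (1, 0) :=
    funext fun q => pdx_eq' f q (hf' q)
  have e2 : pdt f = fun q => fderiv ℝ f q (0, 1) :=
    funext fun q => pdt_eq' f q (hf' q)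
  rw [e1, e2]
  rw [pdt_eq' _ p ((hfd p).clm_apply (differentiableAt_const _)),
      pdx_eq' _ p ((hfd p).clm_apply (differentiableAt_const _))]
  rw [fderiv_clm_apply (hfd p) (differentiableAt_const _),
      fderiv_clm_apply (hfd p) (differentiableAt_const _)]
  simp [key (1,0) (0,1)]

/-- for a nowhere-vanishing solution of the full nonlocal Lax pair,
the conservation-type identity `∂ₜ[(q/λ)Λ] = ∂ₓ[V₁ + V₂Λ]` holds. -/
theorem conservation_type_identity
    (l : ℂ) (hl : l ≠ 0) (ρ : ℝ) (q : ℝ × ℝ → ℂ) (hq : ContDiff ℝ (⊤ : ℕ∞) q)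
    (φ1 φ2 : ℝ × ℝ → ℂ) (h1 : ContDiff ℝ (⊤ : ℕ∞) φ1) (h2 : ContDiff ℝ (⊤ : ℕ∞) φ2)
    (hx : ∀ p : ℝ × ℝ,
      pdx φ1 p = (-I / l ^ 2 + (ρ : ℂ) * I) * φ1 p + q p / l * φ2 p ∧
      pdx φ2 p = -(tq q p / l) * φ1 p + (I / l ^ 2 - (ρ : ℂ) * I) * φ2 p)
    (ht : ∀ p : ℝ × ℝ,
      pdt φ1 p = Vent1 q ρ l p * φ1 p + Vent2 q ρ l p * φ2 p ∧
      pdt φ2 p = Vent3 q ρ l p * φ1 p - Vent1 q ρ l p * φ2 p)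
    (hnz : ∀ p : ℝ × ℝ, φ1 p ≠ 0) :
    ∀ p : ℝ × ℝ,
      pdt (fun p' => q p' / l * (φ2 p' / φ1 p')) p
        = pdx (fun p' => Vent1 q ρ l p' + Vent2 q ρ l p' * (φ2 p' / φ1 p')) p := by
  intro p
  have hφ1 : Differentiable ℝ φ1 := h1.differentiable (by simp)
  have hpx : Differentiable ℝ (pdx φ1) := (pdx_contDiff φ1 h1).differentiable (by simp)
  have hpt : Differentiable ℝ (pdt φ1) := (pdt_contDiff φ1 h1).differentiable (by simp)
  have eL : (fun p' => q p' / l * (φ2 p' / φ1 p'))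
      = fun p' => pdx φ1 p' / φ1 p' - (-I / l ^ 2 + (ρ : ℂ) * I) := by
    funext p'
    rw [(hx p').1]
    field_simp [hl, hnz p']
    ring
  have eR : (fun p' => Vent1 q ρ l p' + Vent2 q ρ l p' * (φ2 p' / φ1 p'))
      = fun p' => pdt φ1 p' / φ1 p' := by
    funext p'
    rw [(ht p').1]
    field_simp [hnz p']
  rw [eL, eR]
  have dx1 : HasDerivAt (fun t => pdx φ1 (p.1, t)) (pdt (pdx φ1) p) p.2 := by
    have := hasDerivAt_snd' (pdx φ1) p (hpx p)
    rwa [← pdt_eq' (pdx φ1) p (hpx p)] at this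
  have dx2 : HasDerivAt (fun t => φ1 (p.1, t)) (pdt φ1 p) p.2 := by
    have := hasDerivAt_snd' φ1 p (hφ1 p)
    rwa [← pdt_eq' φ1 p (hφ1 p)] at this
  have dt1 : HasDerivAt (fun x => pdt φ1 (x, p.2)) (pdx (pdt φ1) p) p.1 := by
    have := hasDerivAt_fst' (pdt φ1) p (hpt p)
    rwa [← pdx_eq' (pdt φ1) p (hpt p)] at this
  have dt2 : HasDerivAt (fun x => φ1 (x, p.2)) (pdx φ1 p) p.1 := by
    have := hasDerivAt_fst' φ1 p (hφ1 p)
    rwa [← pdx_eq' φ1 p (hφ1 p)] at this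
  have hnzp : φ1 (p.1, p.2) ≠ 0 := by rw [Prod.mk.eta]; exact hnz p
  have lhs : pdt (fun p' => pdx φ1 p' / φ1 p' - (-I / l ^ 2 + (ρ : ℂ) * I)) p
      = (pdt (pdx φ1) p * φ1 p - pdx φ1 p * pdt φ1 p) / φ1 p ^ 2 := by
    have e : pdt (fun p' => pdx φ1 p' / φ1 p' - (-I / l ^ 2 + (ρ : ℂ) * I)) p
        = deriv (fun t => pdx φ1 (p.1, t) / φ1 (p.1, t) - (-I / l ^ 2 + (ρ : ℂ) * I)) p.2 := rfl
    rw [e, deriv_sub_const, (dx1.fun_div dx2 hnzp).deriv, Prod.mk.eta]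
  have rhs : pdx (fun p' => pdt φ1 p' / φ1 p') p
      = (pdx (pdt φ1) p * φ1 p - pdt φ1 p * pdx φ1 p) / φ1 p ^ 2 := by
    have e : pdx (fun p' => pdt φ1 p' / φ1 p') p
        = deriv (fun x => pdt φ1 (x, p.2) / φ1 (x, p.2)) p.1 := rfl
    rw [e, (dt1.fun_div dt2 hnzp).deriv, Prod.mk.eta]
  rw [lhs, rhs, pd_comm φ1 h1 p]
  ring
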